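/- arXiv:1010.0286 — 2 statements merged into one kernel-verified Lean document; each statement's English description precedes it below -/
import Mathlib

section
/- Let ζ = exp(2πi/7) and let i, j be integers. If ζ^i + ζ^j + ζ^{-i} + ζ^{-j} is an integer, then ζ^i = 1 and ζ^j = 1 (i.e., 7 divides both i and j). -/
/-!
Over `ℚ` the minimal polynomial of a primitive `p`-th root of unity `ζ` is the cyclotomic
polynomial `1 + X + ⋯ + X^(p-1)`, so the only rational linear relations among
`1, ζ, …, ζ^(p-1)` are multiples of their sum. A relation `∑ ζ^e - q = 0` with fewer than
`p - 1` exponents `e` misses some nonzero exponent, hence is trivial, which forces every `e`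
to be `0`. For `p = 7` the four exponents `±i, ±j` qualify.
-/

open Polynomial Finset

theorem Finset.sum_count_nsmul_eq_sum_map {ι M : Type*} [DecidableEq ι] [AddCommMonoid M]
    {s : Multiset ι} {t : Finset ι} (hs : s.toFinset ⊆ t) (f : ι → M) :
    ∑ i ∈ t, s.count i • f i = (s.map f).sum := by
  rw [Finset.sum_multiset_map_count]
  refine (sum_subset hs fun i _ hi => ?_).symm
  rw [Multiset.count_eq_zero.2 (Multiset.mem_toFinset.not.1 hi), zero_nsmul]

namespace IsPrimitiveRoot

variable {K : Type*} [Field K] {ζ : K} {p : ℕ}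

theorem zpow_eq_pow_zmod_val [NeZero p] (hζ : IsPrimitiveRoot ζ p) (m : ℤ) :
    ζ ^ m = ζ ^ (m : ZMod p).val := by
  have hne : ζ ≠ 0 := hζ.ne_zero (NeZero.ne p)
  rw [← zpow_natCast, ← div_eq_one_iff_eq (zpow_ne_zero _ hne), ← zpow_sub₀ hne,
    hζ.zpow_eq_one_iff_dvd, ← ZMod.intCast_zmod_eq_zero_iff_dvd]
  simp

theorem eq_of_sum_range_mul_pow_eq_zero [CharZero K] (hp : p.Prime)
    (hζ : IsPrimitiveRoot ζ p) (c : ℕ → ℚ) (h : ∑ k ∈ range p, (c k : K) * ζ ^ k = 0) :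
    ∀ k < p, c k = c (p - 1) := by
  have hdeg : (minpoly ℚ ζ).natDegree = p - 1 := by
    rw [← cyclotomic_eq_minpoly_rat hζ hp.pos, natDegree_cyclotomic, Nat.totient_prime hp]
  have hsum : ∑ k ∈ range (p - 1), (c k - c (p - 1)) • ζ ^ k = 0 := by
    calc ∑ k ∈ range (p - 1), (c k - c (p - 1)) • ζ ^ k
        = ∑ k ∈ range p, ((c k : K) - c (p - 1)) * ζ ^ k := by
          rw [← Nat.sub_add_cancel hp.one_le, sum_range_succ]
          simp [Rat.smul_def]
      _ = ∑ k ∈ range p, (c k : K) * ζ ^ k - c (p - 1) * ∑ k ∈ range p, ζ ^ k := by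
          rw [mul_sum, ← sum_sub_distrib]
          exact sum_congr rfl fun k _ => sub_mul _ _ _
      _ = 0 := by rw [h, hζ.geom_sum_eq_zero hp.one_lt, mul_zero, sub_zero]
  have hcoeff := Fintype.linearIndependent_iff.1 (linearIndependent_pow ζ)
    (fun i => c i - c (p - 1)) <| by
      rwa [Fin.sum_univ_eq_sum_range (fun i => (c i - c (p - 1)) • ζ ^ i), hdeg]
  intro k hk
  rcases Nat.lt_or_ge k (p - 1) with hk' | hk'
  · exact sub_eq_zero.1 (hcoeff ⟨k, hdeg ▸ hk'⟩)
  · rw [show k = p - 1 by omega]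

theorem eq_zero_of_sum_pow_eq_ratCast [CharZero K] (hp : p.Prime) (hζ : IsPrimitiveRoot ζ p)
    {s : Multiset ℕ} (hs : ∀ e ∈ s, e < p) (hcard : Multiset.card s < p - 1) {q : ℚ}
    (h : (s.map (ζ ^ ·)).sum = q) : ∀ e ∈ s, e = 0 := by
  have hsub : s.toFinset ⊆ range p := fun e he =>
    mem_range.2 (hs e (Multiset.mem_toFinset.1 he))
  set c : ℕ → ℚ := fun k => s.count k - if k = 0 then q else 0
  have hrel : ∑ k ∈ range p, (c k : K) * ζ ^ k = 0 := by
    calc ∑ k ∈ range p, (c k : K) * ζ ^ k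
        = ∑ k ∈ range p, s.count k • ζ ^ k - ∑ k ∈ range p, if k = 0 then (q : K) else 0 := by
          rw [← sum_sub_distrib]
          refine sum_congr rfl fun k _ => ?_
          split_ifs with hk <;> simp [c, hk, nsmul_eq_mul]
      _ = 0 := by
          rw [sum_count_nsmul_eq_sum_map hsub, sum_ite_eq', if_pos (mem_range.2 hp.pos), h,
            sub_self]
  have hc := hζ.eq_of_sum_range_mul_pow_eq_zero hp c hrel
  obtain ⟨k, hk, hks⟩ : ∃ k ∈ (range p).erase 0, k ∉ s := by
    by_contra! hall
    have hle := (card_le_card (fun k hk => Multiset.mem_toFinset.2 (hall k hk))).trans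
      (Multiset.toFinset_card_le s)
    rw [card_erase_of_mem (mem_range.2 hp.pos), card_range] at hle
    omega
  have hc0 : c (p - 1) = 0 := by
    rw [← hc k (mem_range.1 (mem_of_mem_erase hk))]
    simp [c, ne_of_mem_erase hk, Multiset.count_eq_zero.2 hks]
  intro e he
  by_contra he0
  have hce : c e = 0 := (hc e (hs e he)).trans hc0
  simp only [c, if_neg he0, sub_zero, Nat.cast_eq_zero, Multiset.count_eq_zero] at hce
  exact hce he

end IsPrimitiveRoot

/-- If `ζ = exp(2πi/7)` and `ζ^i + ζ^j + ζ^{-i} + ζ^{-j}` is an integer, then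
`ζ^i = 1` and `ζ^j = 1`. -/
theorem seventh_root_sum_integer (i j : ℤ)
    (ζ : ℂ) (hζ : ζ = Complex.exp (2 * Real.pi * Complex.I / 7))
    (h : ∃ n : ℤ, ζ ^ i + ζ ^ j + ζ ^ (-i) + ζ ^ (-j) = (n : ℂ)) :
    ζ ^ i = 1 ∧ ζ ^ j = 1 := by
  obtain ⟨n, hn⟩ := h
  have hprim : IsPrimitiveRoot ζ 7 := by
    simpa [hζ] using Complex.isPrimitiveRoot_exp 7 (by norm_num)
  set e : ℤ → ℕ := fun m => (m : ZMod 7).val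
  have hexp : ∀ m, ζ ^ m = ζ ^ e m := hprim.zpow_eq_pow_zmod_val
  have hzero := hprim.eq_zero_of_sum_pow_eq_ratCast (by norm_num)
    (s := {e i, e j, e (-i), e (-j)}) (by simp [e, ZMod.val_lt]) (by simp) (q := n)
    (by simpa [hexp, add_assoc] using hn)
  rw [hexp, hexp, hzero (e i) (by simp), hzero (e j) (by simp), pow_zero]
  exact ⟨rfl, rfl⟩
end

section
/- For a prime p and ζ = exp(2πi/p), the quantity a_1 := (1/(p−1))·Σ_{j=1}^{p−1} 1/((1−ζ^j)(1−ζ^j)) equals (5−p)/12. -/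
open Complex Finset

/-!
Write `ω = ζ ^ j` for `0 < j < n`. Differentiating the geometric series gives
`(1 - ω) * ∑_{k<n} k ω^k = -n`, so `1 / (1 - ω)^2 = c_j^2 / n^2` with `c_j = ∑_{k<n} k ω^k`.
Expanding `c_j^2` and summing over all `j < n`, orthogonality of characters keeps only the pairs
`k + l ≡ 0 mod n`, which gives `∑_{j<n} c_j^2 = n ∑_{k<n} k (n - k)`; the `j = 0` term is
`c_0 = n (n - 1) / 2`, and the rest is arithmetic with power sums.
-/

section

variable {R : Type*} [CommRing R]

theorem two_mul_sum_range_natCast (n : ℕ) :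
    2 * ∑ k ∈ range n, (k : R) = n * (n - 1) := by
  induction n with
  | zero => simp
  | succ n ih =>
    rw [sum_range_succ, mul_add, ih]
    push_cast
    ring

theorem six_mul_sum_range_natCast_mul_sub (n : ℕ) :
    6 * ∑ k ∈ range n, (k : R) * (n - k) = (n + 1) * n * (n - 1) := by
  induction n with
  | zero => simp
  | succ n ih =>
    have hshift : ∑ k ∈ range n, (k : R) * ((n + 1 : ℕ) - k) =
        ∑ k ∈ range n, (k : R) * (n - k) + ∑ k ∈ range n, (k : R) := by
      rw [← sum_add_distrib]
      exact sum_congr rfl fun k _ => by push_cast; ring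
    rw [sum_range_succ, hshift]
    push_cast
    linear_combination ih + 3 * two_mul_sum_range_natCast (R := R) n

theorem one_sub_mul_sum_range_natCast_mul_pow (ω : R) (n : ℕ) :
    (1 - ω) * ∑ k ∈ range n, (k : R) * ω ^ k = ω * ∑ k ∈ range n, ω ^ k - n * ω ^ n := by
  induction n with
  | zero => simp
  | succ n ih =>
    rw [sum_range_succ, sum_range_succ, mul_add, ih]
    push_cast
    ring

theorem sum_range_ite_dvd_add {M : Type*} [AddCommMonoid M] {n k : ℕ} (hk : 0 < k) (hkn : k < n)
    (g : ℕ → M) : ∑ l ∈ range n, (if n ∣ k + l then g l else 0) = g (n - k) := by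
  have hdvd : ∀ l < n, n ∣ k + l ↔ l = n - k := fun l hl =>
    ⟨fun h => by have := Nat.eq_of_dvd_of_lt_two_mul (by omega) h (by omega); omega,
     fun h => by rw [h, Nat.add_sub_cancel' hkn.le]⟩
  calc ∑ l ∈ range n, (if n ∣ k + l then g l else 0)
      = ∑ l ∈ range n, if l = n - k then g l else 0 :=
        sum_congr rfl fun l hl => by simp only [hdvd l (mem_range.1 hl)]
    _ = g (n - k) := by rw [sum_ite_eq', if_pos (mem_range.2 (by omega))]

theorem sum_range_sum_range_ite_dvd_add (n : ℕ) :
    ∑ k ∈ range n, ∑ l ∈ range n, (if n ∣ k + l then (k : R) * l else 0) =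
      ∑ k ∈ range n, (k : R) * (n - k) := by
  refine sum_congr rfl fun k hk => ?_
  rcases Nat.eq_zero_or_pos k with rfl | hk0
  · simp
  · rw [sum_range_ite_dvd_add hk0 (mem_range.1 hk), Nat.cast_sub (mem_range.1 hk).le]

end

namespace IsPrimitiveRoot

section CommRing

variable {R : Type*} [CommRing R] [IsDomain R] {ζ : R} {n : ℕ}

theorem sum_range_pow_mul (hζ : IsPrimitiveRoot ζ n) (m : ℕ) :
    ∑ j ∈ range n, ζ ^ (j * m) = if n ∣ m then (n : R) else 0 := by
  simp_rw [pow_mul']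
  split_ifs with hm
  · simp [(hζ.pow_eq_one_iff_dvd m).2 hm]
  · have hne : ζ ^ m - 1 ≠ 0 := sub_ne_zero.2 fun h => hm ((hζ.pow_eq_one_iff_dvd m).1 h)
    have hgeom := geom_sum_mul (ζ ^ m) n
    rw [← pow_mul', pow_mul, hζ.pow_eq_one, one_pow, sub_self] at hgeom
    exact (mul_eq_zero.1 hgeom).resolve_right hne

theorem one_sub_pow_mul_sum_range_natCast_mul_pow (hζ : IsPrimitiveRoot ζ n) {j : ℕ}
    (hj : ¬ n ∣ j) : (1 - ζ ^ j) * ∑ k ∈ range n, (k : R) * (ζ ^ j) ^ k = -n := by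
  have hgeom : ∑ k ∈ range n, (ζ ^ j) ^ k = 0 := by
    simpa only [pow_mul', if_neg hj] using hζ.sum_range_pow_mul j
  have hpow : (ζ ^ j) ^ n = 1 := by rw [← pow_mul, mul_comm, pow_mul, hζ.pow_eq_one, one_pow]
  rw [one_sub_mul_sum_range_natCast_mul_pow, hgeom, hpow]
  ring

theorem sum_range_sq_sum_range_natCast_mul_pow (hζ : IsPrimitiveRoot ζ n) :
    ∑ j ∈ range n, (∑ k ∈ range n, (k : R) * (ζ ^ j) ^ k) ^ 2 =
      n * ∑ k ∈ range n, (k : R) * (n - k) := by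
  calc ∑ j ∈ range n, (∑ k ∈ range n, (k : R) * (ζ ^ j) ^ k) ^ 2
      = ∑ k ∈ range n, ∑ l ∈ range n, (k : R) * l * ∑ j ∈ range n, ζ ^ (j * (k + l)) := by
        simp_rw [sq, sum_mul_sum, mul_sum]
        rw [sum_comm]
        refine sum_congr rfl fun k _ => ?_
        rw [sum_comm]
        refine sum_congr rfl fun l _ => sum_congr rfl fun j _ => ?_
        rw [mul_add, pow_add, pow_mul, pow_mul]
        ring
    _ = n * ∑ k ∈ range n, ∑ l ∈ range n, (if n ∣ k + l then (k : R) * l else 0) := by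
        simp_rw [hζ.sum_range_pow_mul, mul_sum, mul_ite, mul_zero, mul_comm (n : R)]
    _ = n * ∑ k ∈ range n, (k : R) * (n - k) := by
        rw [sum_range_sum_range_ite_dvd_add]

end CommRing

theorem sum_Ico_inv_one_sub_pow_sq {K : Type*} [Field K] [CharZero K] {ζ : K} {n : ℕ}
    (hζ : IsPrimitiveRoot ζ n) (hn : n ≠ 0) :
    ∑ j ∈ Ico 1 n, ((1 - ζ ^ j) ^ 2)⁻¹ = ((n : K) - 1) * (5 - n) / 12 := by
  set c : ℕ → K := fun j => ∑ k ∈ range n, (k : K) * (ζ ^ j) ^ k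
  have hnK : (n : K) ≠ 0 := Nat.cast_ne_zero.2 hn
  have hinv : ∀ j ∈ Ico 1 n, ((1 - ζ ^ j) ^ 2)⁻¹ = c j ^ 2 / n ^ 2 := by
    intro j hj
    obtain ⟨hj0, hjn⟩ := mem_Ico.1 hj
    refine inv_eq_of_mul_eq_one_right ?_
    rw [mul_div_assoc', ← mul_pow,
      hζ.one_sub_pow_mul_sum_range_natCast_mul_pow (Nat.not_dvd_of_pos_of_lt hj0 hjn), neg_sq,
      div_self (pow_ne_zero 2 hnK)]
  have hc0 : c 0 = ∑ k ∈ range n, (k : K) := by simp [c]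
  rw [sum_congr rfl hinv, ← sum_div, sum_Ico_eq_sub _ (Nat.one_le_iff_ne_zero.2 hn),
    sum_range_one, hζ.sum_range_sq_sum_range_natCast_mul_pow, hc0]
  have h1 := two_mul_sum_range_natCast (R := K) n
  have h2 := six_mul_sum_range_natCast_mul_sub (R := K) n
  field_simp
  linear_combination 2 * n * h2 - 3 * (2 * ∑ k ∈ range n, (k : K) + n * (n - 1)) * h1

end IsPrimitiveRoot

/-- For a prime `p` and `ζ = exp(2πi/p)`,
`(1/(p-1)) · Σ_{j=1}^{p-1} 1/((1-ζ^j)(1-ζ^j)) = (5-p)/12`. -/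
theorem lefschetz_coefficient_a_one (p : ℕ) (hp : p.Prime)
    (ζ : ℂ) (hζ : ζ = Complex.exp (2 * Real.pi * Complex.I / p)) :
    (1 / ((p : ℂ) - 1)) * ∑ j ∈ Finset.Icc 1 (p - 1), 1 / ((1 - ζ ^ j) * (1 - ζ ^ j)) =
      ((5 : ℂ) - p) / 12 := by
  have hprim : IsPrimitiveRoot ζ p := hζ ▸ Complex.isPrimitiveRoot_exp p hp.ne_zero
  have hIcc : Icc 1 (p - 1) = Ico 1 p := by
    ext j
    simp only [mem_Icc, mem_Ico]
    omega
  have hp1 : (p : ℂ) - 1 ≠ 0 := sub_ne_zero.2 (by exact_mod_cast hp.one_lt.ne')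
  simp_rw [one_div, ← sq, hIcc, hprim.sum_Ico_inv_one_sub_pow_sq hp.ne_zero]
  field_simp
end
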